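/- Let 0 < H < 1/2, T > 0, r = 1/(2H), and fix a partition {s_0 = 0 < … < s_M = T} and a subinterval (t_{j-1}, t_j] ⊆ [0,T]. Then Σ_{i=1}^{M} |μ_R((s_{i-1},s_i]×(t_{j-1},t_j])|^r ≤ 5(t_j − t_{j-1}), where μ_R is the rectangular increment measure of the fBm covariance R. -/

import Mathlib

/-!
With `φ(x) = |d - x|^(2H) - |c - x|^(2H)` one has `μ_R((a,b] × (c,d]) = (φ(a) - φ(b)) / 2`.
Concavity of `x ↦ x^(2H)` makes `φ` increasing on `(-∞, c]`, decreasing on `[c, d]` and increasing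
on `[d, ∞)`, and its Hölder continuity gives `|φ| ≤ (d - c)^(2H)`. Hence every increment satisfies
`|μ_R| ≤ (d - c)^(2H)`, and along any partition `∑ |μ_R| ≤ 3 (d - c)^(2H)`, three monotone pieces
of oscillation at most `2 (d - c)^(2H)` each. As `r ≥ 1`,
`∑ |μ_R|^r ≤ ((d - c)^(2H))^(r - 1) ∑ |μ_R| ≤ 3 ((d - c)^(2H))^r = 3 (d - c)`.
-/

/-- The rectangular increment of the fBm covariance kernel. -/
noncomputable def muR (H a b c d : ℝ) : ℝ :=
  (1/2) * (|d - a| ^ (2*H) + |c - b| ^ (2*H) - |d - b| ^ (2*H) - |c - a| ^ (2*H))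

open Real Set Finset

theorem ConcaveOn.map_add_sub_map_le {s : Set ℝ} {f : ℝ → ℝ} (hf : ConcaveOn ℝ s f)
    {a b h : ℝ} (ha : a ∈ s) (hbh : b + h ∈ s) (hab : a ≤ b) (hh : 0 ≤ h) :
    f (b + h) - f b ≤ f (a + h) - f a := by
  rcases (show a ≤ b + h by linarith).eq_or_lt with hD | hD
  · obtain rfl : b = a := by linarith
    obtain rfl : h = 0 := by linarith
    rfl
  -- `a + h` and `b` are the convex combinations of `a` and `b + h` with swapped weights
  set θ := h / (b + h - a)
  have hθ₀ : 0 ≤ θ := div_nonneg hh (by linarith)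
  have hθ₁ : θ ≤ 1 := div_le_one_of_le₀ (by linarith) (by linarith)
  have hθ : θ * (b + h - a) = h := div_mul_cancel₀ h (by linarith)
  have h₁ := hf.2 ha hbh (sub_nonneg.2 hθ₁) hθ₀ (sub_add_cancel 1 θ)
  have h₂ := hf.2 ha hbh hθ₀ (sub_nonneg.2 hθ₁) (add_sub_cancel θ 1)
  simp only [smul_eq_mul] at h₁ h₂
  rw [show (1 - θ) * a + θ * (b + h) = a + h by linear_combination hθ] at h₁
  rw [show θ * a + (1 - θ) * (b + h) = b by linear_combination -hθ] at h₂
  linarith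

namespace Real

variable {α : ℝ}

theorem rpow_add_sub_rpow_le (hα₀ : 0 ≤ α) (hα₁ : α ≤ 1) {a b h : ℝ} (ha : 0 ≤ a)
    (hab : a ≤ b) (hh : 0 ≤ h) : (b + h) ^ α - b ^ α ≤ (a + h) ^ α - a ^ α :=
  (concaveOn_rpow hα₀ hα₁).map_add_sub_map_le ha (show 0 ≤ b + h by linarith) hab hh

theorem abs_rpow_sub_rpow_le (hα₀ : 0 ≤ α) (hα₁ : α ≤ 1) {u v : ℝ} (hu : 0 ≤ u) (hv : 0 ≤ v) :
    |u ^ α - v ^ α| ≤ |u - v| ^ α := by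
  wlog hvu : v ≤ u generalizing u v
  · rw [abs_sub_comm, abs_sub_comm u]
    exact this hv hu (by linarith)
  have hsub := rpow_add_le_add_rpow hv (sub_nonneg.2 hvu) hα₀ hα₁
  rw [add_sub_cancel] at hsub
  rw [abs_of_nonneg (sub_nonneg.2 (rpow_le_rpow hv hvu hα₀)), abs_of_nonneg (sub_nonneg.2 hvu)]
  linarith

theorem rpow_le_rpow_sub_one_mul_of_le {r x K : ℝ} (hr : 1 ≤ r) (hx : 0 ≤ x) (hxK : x ≤ K) :
    x ^ r ≤ K ^ (r - 1) * x := by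
  calc x ^ r = x ^ (r - 1) * x := by
        rw [← rpow_add_one' hx (by linarith), sub_add_cancel]
    _ ≤ K ^ (r - 1) * x := by gcongr

end Real

theorem Fin.sum_succ_sub_castSucc {G : Type*} [AddCommGroup G] {M : ℕ} (f : Fin (M + 1) → G) :
    ∑ i : Fin M, (f i.succ - f i.castSucc) = f (Fin.last M) - f 0 := by
  induction M with
  | zero => simp
  | succ n ih =>
    have ih' := ih fun j ↦ f j.castSucc
    rw [Fin.sum_univ_castSucc, Fin.succ_last]
    simp only [Fin.succ_castSucc, Fin.castSucc_zero] at ih' ⊢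
    rw [ih']
    abel

section Variation

variable {M : ℕ}

theorem Monotone.sum_abs_succ_sub_castSucc {u : Fin (M + 1) → ℝ} (hu : Monotone u) :
    ∑ i : Fin M, |u i.succ - u i.castSucc| = u (Fin.last M) - u 0 := by
  rw [← Fin.sum_succ_sub_castSucc]
  exact sum_congr rfl fun i _ ↦ abs_of_nonneg (sub_nonneg.2 (hu (Fin.castSucc_le_succ i)))

theorem Antitone.sum_abs_succ_sub_castSucc {u : Fin (M + 1) → ℝ} (hu : Antitone u) :
    ∑ i : Fin M, |u i.succ - u i.castSucc| = u 0 - u (Fin.last M) := by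
  have h := hu.neg.sum_abs_succ_sub_castSucc
  simp only [neg_sub_neg] at h
  simpa only [abs_sub_comm] using h

theorem sum_abs_succ_sub_castSucc_le {u : Fin (M + 1) → ℝ} (hu : Monotone u ∨ Antitone u)
    {K : ℝ} (hK : ∀ i, |u i| ≤ K) : ∑ i : Fin M, |u i.succ - u i.castSucc| ≤ 2 * K := by
  have h₀ := abs_le.1 (hK 0)
  have hM := abs_le.1 (hK (Fin.last M))
  rcases hu with hu | hu
  · rw [hu.sum_abs_succ_sub_castSucc]; linarith
  · rw [hu.sum_abs_succ_sub_castSucc]; linarith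

/-- `φ` is the sum, up to constants, of the monotone functions `φ (min x c)`, `φ (max x d)` and
the antitone `φ (max c (min x d))`, each of variation at most `2 * K`. -/
theorem sum_abs_succ_sub_castSucc_le_of_monotoneOn_antitoneOn_monotoneOn {φ : ℝ → ℝ}
    {c d K : ℝ} (hcd : c ≤ d) (h₁ : MonotoneOn φ (Iic c)) (h₂ : AntitoneOn φ (Icc c d))
    (h₃ : MonotoneOn φ (Ici d)) (hK : ∀ x, |φ x| ≤ K) {s : Fin (M + 1) → ℝ} (hs : Monotone s) :
    ∑ i : Fin M, |φ (s i.succ) - φ (s i.castSucc)| ≤ 6 * K := by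
  set g₁ : ℝ → ℝ := fun x ↦ φ (min x c)
  set g₂ : ℝ → ℝ := fun x ↦ φ (max c (min x d))
  set g₃ : ℝ → ℝ := fun x ↦ φ (max x d)
  have hφ : ∀ x, φ x = g₁ x + g₂ x + g₃ x - φ c - φ d := by
    intro x
    rcases le_total x c with hxc | hcx
    · simp only [g₁, g₂, g₃, min_eq_left hxc, min_eq_left (hxc.trans hcd), max_eq_left hxc,
        max_eq_right (hxc.trans hcd)]
      ring
    rcases le_total x d with hxd | hdx
    · simp only [g₁, g₂, g₃, min_eq_right hcx, min_eq_left hxd, max_eq_right hcx,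
        max_eq_right hxd]
      ring
    · simp only [g₁, g₂, g₃, min_eq_right (hcd.trans hdx), min_eq_right hdx, max_eq_right hcd,
        max_eq_left hdx]
      ring
  have hg₁ : Monotone (g₁ ∘ s) := fun i j hij ↦
    h₁ (Set.mem_Iic.2 (min_le_right _ _)) (Set.mem_Iic.2 (min_le_right _ _))
      (min_le_min_right _ (hs hij))
  have hg₂ : Antitone (g₂ ∘ s) := fun i j hij ↦
    h₂ ⟨le_max_left _ _, max_le hcd (min_le_right _ _)⟩
      ⟨le_max_left _ _, max_le hcd (min_le_right _ _)⟩
      (max_le_max_left _ (min_le_min_right _ (hs hij)))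
  have hg₃ : Monotone (g₃ ∘ s) := fun i j hij ↦
    h₃ (Set.mem_Ici.2 (le_max_right _ _)) (Set.mem_Ici.2 (le_max_right _ _))
      (max_le_max_right _ (hs hij))
  calc ∑ i : Fin M, |φ (s i.succ) - φ (s i.castSucc)|
      ≤ ∑ i : Fin M, (|(g₁ ∘ s) i.succ - (g₁ ∘ s) i.castSucc|
          + |(g₂ ∘ s) i.succ - (g₂ ∘ s) i.castSucc|
          + |(g₃ ∘ s) i.succ - (g₃ ∘ s) i.castSucc|) := by
        refine sum_le_sum fun i _ ↦ ?_
        rw [hφ (s i.succ), hφ (s i.castSucc)]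
        refine (congrArg abs ?_).trans_le (abs_add_three _ _ _)
        simp only [Function.comp_apply]
        ring
    _ ≤ 2 * K + 2 * K + 2 * K := by
        simp only [sum_add_distrib]
        gcongr
        · exact sum_abs_succ_sub_castSucc_le (.inl hg₁) fun i ↦ hK _
        · exact sum_abs_succ_sub_castSucc_le (.inr hg₂) fun i ↦ hK _
        · exact sum_abs_succ_sub_castSucc_le (.inl hg₃) fun i ↦ hK _
    _ = 6 * K := by ring

end Variation

noncomputable def stripProfile (α c d x : ℝ) : ℝ := |d - x| ^ α - |c - x| ^ α

theorem muR_eq_stripProfile_sub (H a b c d : ℝ) :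
    muR H a b c d = (stripProfile (2 * H) c d a - stripProfile (2 * H) c d b) / 2 := by
  simp only [muR, stripProfile]
  ring

section StripProfile

variable {α c d : ℝ}

theorem stripProfile_monotoneOn_Iic (hα₀ : 0 ≤ α) (hα₁ : α ≤ 1) (hcd : c ≤ d) :
    MonotoneOn (stripProfile α c d) (Iic c) := by
  intro x hx y hy hxy
  rw [Set.mem_Iic] at hx hy
  have key := rpow_add_sub_rpow_le hα₀ hα₁ (sub_nonneg.2 hy) (sub_le_sub_left hxy c)
    (sub_nonneg.2 hcd)
  rw [show c - x + (d - c) = d - x by ring, show c - y + (d - c) = d - y by ring] at key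
  simp only [stripProfile]
  rw [abs_of_nonneg (by linarith : 0 ≤ d - x), abs_of_nonneg (sub_nonneg.2 hx),
    abs_of_nonneg (by linarith : 0 ≤ d - y), abs_of_nonneg (sub_nonneg.2 hy)]
  linarith

theorem stripProfile_antitoneOn_Icc (hα₀ : 0 ≤ α) : AntitoneOn (stripProfile α c d) (Icc c d) := by
  rintro x ⟨hcx, hxd⟩ y ⟨hcy, hyd⟩ hxy
  simp only [stripProfile]
  rw [abs_of_nonneg (sub_nonneg.2 hxd), abs_sub_comm c x, abs_of_nonneg (sub_nonneg.2 hcx),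
    abs_of_nonneg (sub_nonneg.2 hyd), abs_sub_comm c y, abs_of_nonneg (sub_nonneg.2 hcy)]
  gcongr

theorem stripProfile_monotoneOn_Ici (hα₀ : 0 ≤ α) (hα₁ : α ≤ 1) (hcd : c ≤ d) :
    MonotoneOn (stripProfile α c d) (Ici d) := by
  intro x hx y hy hxy
  rw [Set.mem_Ici] at hx hy
  have key := rpow_add_sub_rpow_le hα₀ hα₁ (sub_nonneg.2 hx) (sub_le_sub_right hxy d)
    (sub_nonneg.2 hcd)
  rw [show x - d + (d - c) = x - c by ring, show y - d + (d - c) = y - c by ring] at key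
  simp only [stripProfile]
  rw [abs_sub_comm d x, abs_of_nonneg (sub_nonneg.2 hx), abs_sub_comm c x,
    abs_of_nonneg (by linarith : 0 ≤ x - c), abs_sub_comm d y, abs_of_nonneg (sub_nonneg.2 hy),
    abs_sub_comm c y, abs_of_nonneg (by linarith : 0 ≤ y - c)]
  linarith

theorem abs_stripProfile_le (hα₀ : 0 ≤ α) (hα₁ : α ≤ 1) (x : ℝ) :
    |stripProfile α c d x| ≤ |d - c| ^ α := by
  calc |stripProfile α c d x| ≤ |(|d - x| - |c - x|)| ^ α :=
        abs_rpow_sub_rpow_le hα₀ hα₁ (abs_nonneg _) (abs_nonneg _)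
    _ ≤ |(d - x) - (c - x)| ^ α :=
        rpow_le_rpow (abs_nonneg _) (abs_abs_sub_abs_le_abs_sub _ _) hα₀
    _ = |d - c| ^ α := by rw [sub_sub_sub_cancel_right]

end StripProfile

section Increment

variable {H c d : ℝ}

theorem abs_muR_le (hH₀ : 0 ≤ H) (hH₁ : H ≤ 1 / 2) (a b : ℝ) :
    |muR H a b c d| ≤ |d - c| ^ (2 * H) := by
  have hα₀ : 0 ≤ 2 * H := by linarith
  have hα₁ : 2 * H ≤ 1 := by linarith
  have ha := abs_stripProfile_le (c := c) (d := d) hα₀ hα₁ a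
  have hb := abs_stripProfile_le (c := c) (d := d) hα₀ hα₁ b
  rw [muR_eq_stripProfile_sub, abs_div, abs_two]
  linarith [abs_sub (stripProfile (2 * H) c d a) (stripProfile (2 * H) c d b)]

theorem sum_abs_muR_le (hH₀ : 0 ≤ H) (hH₁ : H ≤ 1 / 2) (hcd : c ≤ d) {M : ℕ}
    {s : Fin (M + 1) → ℝ} (hs : Monotone s) :
    ∑ i : Fin M, |muR H (s i.castSucc) (s i.succ) c d| ≤ 3 * |d - c| ^ (2 * H) := by
  have hα₀ : 0 ≤ 2 * H := by linarith
  have hα₁ : 2 * H ≤ 1 := by linarith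
  have hvar := sum_abs_succ_sub_castSucc_le_of_monotoneOn_antitoneOn_monotoneOn hcd
    (stripProfile_monotoneOn_Iic hα₀ hα₁ hcd) (stripProfile_antitoneOn_Icc hα₀)
    (stripProfile_monotoneOn_Ici hα₀ hα₁ hcd) (abs_stripProfile_le hα₀ hα₁) hs
  have hμ (i : Fin M) : |muR H (s i.castSucc) (s i.succ) c d|
      = |stripProfile (2 * H) c d (s i.succ) - stripProfile (2 * H) c d (s i.castSucc)| / 2 := by
    rw [muR_eq_stripProfile_sub, abs_div, abs_two, abs_sub_comm]
  rw [sum_congr rfl fun i _ ↦ hμ i, ← sum_div]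
  linarith

end Increment

theorem strip_sum_bound_general (H : ℝ) (hH0 : 0 < H) (hH : H < 1/2)
    (r : ℝ) (hr : r = 1/(2*H))
    (M : ℕ) (s : Fin (M+1) → ℝ)
    (hs : StrictMono s)
    (c d : ℝ) (hcd : c < d) :
    ∑ i : Fin M, |muR H (s i.castSucc) (s i.succ) c d| ^ r ≤ 5 * (d - c) := by
  have hr₁ : 1 ≤ r := by rw [hr, le_div_iff₀ (by linarith)]; linarith
  have hdc : |d - c| = d - c := abs_of_pos (sub_pos.2 hcd)
  have hμK (i : Fin M) : |muR H (s i.castSucc) (s i.succ) c d| ≤ (d - c) ^ (2 * H) :=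
    hdc ▸ abs_muR_le hH0.le hH.le _ _
  calc ∑ i : Fin M, |muR H (s i.castSucc) (s i.succ) c d| ^ r
      ≤ ∑ i : Fin M, ((d - c) ^ (2 * H)) ^ (r - 1) * |muR H (s i.castSucc) (s i.succ) c d| :=
        sum_le_sum fun i _ ↦ rpow_le_rpow_sub_one_mul_of_le hr₁ (abs_nonneg _) (hμK i)
    _ ≤ ((d - c) ^ (2 * H)) ^ (r - 1) * (3 * (d - c) ^ (2 * H)) := by
        rw [← mul_sum]
        gcongr
        simpa only [hdc] using sum_abs_muR_le hH0.le hH.le hcd.le hs.monotone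
    _ = 3 * (d - c) := by
        rw [mul_left_comm, ← rpow_add_one' (by positivity) (by linarith), sub_add_cancel,
          ← rpow_mul (by linarith), hr, mul_one_div_cancel (by linarith), rpow_one]
    _ ≤ 5 * (d - c) := by linarith

theorem strip_sum_bound (H T : ℝ) (hH0 : 0 < H) (hH : H < 1/2) (hT : 0 < T)
    (r : ℝ) (hr : r = 1/(2*H))
    (M : ℕ) (s : Fin (M+1) → ℝ)
    (hs : StrictMono s) (hs0 : s 0 = 0) (hsM : s (Fin.last M) = T)
    (c d : ℝ) (hc : 0 ≤ c) (hcd : c < d) (hdT : d ≤ T) :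
    ∑ i : Fin M, |muR H (s i.castSucc) (s i.succ) c d| ^ r ≤ 5 * (d - c) :=
  strip_sum_bound_general H hH0 hH r hr M s hs c d hcd
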